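/- The Max state is the n-fold tensor Fourier transform of the GHZ state: F^{⊗n}|GHZ⟩ₙ = |Max⟩ₙ. -/

import Mathlib

/-- The primitive `d`-th root of unity `q = exp(2πi/d)`. -/
noncomputable def qRoot (d : ℕ) : ℂ := Complex.exp (2 * Real.pi * Complex.I / d)

/-- The clock matrix `Z`, diagonal with entries `q^j`. -/
noncomputable def clockZ (d : ℕ) [NeZero d] : Matrix (ZMod d) (ZMod d) ℂ :=
  Matrix.diagonal fun j => qRoot d ^ j.val

/-- The shift matrix `X`, with `X_{j,k} = 1` iff `j = k + 1` in `ℤ/d`. -/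
def shiftX (d : ℕ) [NeZero d] : Matrix (ZMod d) (ZMod d) ℂ :=
  Matrix.of fun j k => if j = k + 1 then 1 else 0

/-- The discrete Fourier transform matrix `F`, with `F_{j,k} = q^{jk}/√d`. -/
noncomputable def dft (d : ℕ) [NeZero d] : Matrix (ZMod d) (ZMod d) ℂ :=
  Matrix.of fun j k => qRoot d ^ (j.val * k.val) / (Real.sqrt d : ℂ)

/-- The coefficient function of `|GHZ⟩ₙ = d^{-1/2} ∑_k |k,…,k⟩`. -/
noncomputable def ghzFun (d n : ℕ) [NeZero d] : (Fin n → ZMod d) → ℂ := fun k =>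
  ((Real.sqrt d : ℂ))⁻¹ * ∑ c : ZMod d, (if k = fun _ => c then 1 else 0)

/-- The coefficient function of `|Max⟩ₙ = d^{-(n-1)/2} ∑_{∑ kᵢ = 0} |k⟩`. -/
noncomputable def maxFun (d n : ℕ) [NeZero d] : (Fin n → ZMod d) → ℂ := fun k =>
  (((d : ℝ) ^ (((n : ℝ) - 1) / 2) : ℝ) : ℂ)⁻¹ * (if ∑ i, k i = 0 then 1 else 0)

/-!
Writing `F_{j,k} = ψ(jk)/√d` with the standard additive character `ψ` of `ℤ/d`, the `k`-th
coefficient of `F^{⊗n}|GHZ⟩ₙ` is `d^{-(n+1)/2} ∑_c ψ(c · ∑ᵢ kᵢ)`, and this character sum is `d`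
when `∑ᵢ kᵢ = 0` and vanishes otherwise.
-/

open Finset

lemma AddChar.map_sum_eq_prod {ι A M : Type*} [AddCommMonoid A] [CommMonoid M]
    (ψ : AddChar A M) (s : Finset ι) (x : ι → A) : ψ (∑ i ∈ s, x i) = ∏ i ∈ s, ψ (x i) := by
  induction s using Finset.cons_induction with
  | empty => simp
  | cons a s _ ih => rw [sum_cons, prod_cons, map_add_eq_mul, ih]

lemma qRoot_pow_eq_stdAddChar (d : ℕ) [NeZero d] (m : ℕ) :
    qRoot d ^ m = ZMod.stdAddChar (m : ZMod d) := by
  rw [qRoot, ← Complex.exp_nat_mul, ZMod.stdAddChar_apply, ZMod.toCircle_natCast]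
  ring_nf

lemma dft_apply_eq_stdAddChar (d : ℕ) [NeZero d] (j k : ZMod d) :
    dft d j k = ZMod.stdAddChar (j * k) / (√d : ℂ) := by
  rw [dft, Matrix.of_apply, qRoot_pow_eq_stdAddChar, Nat.cast_mul, ZMod.natCast_zmod_val,
    ZMod.natCast_zmod_val]

lemma prod_dft_apply {ι : Type*} [Fintype ι] (d : ℕ) [NeZero d] (k : ι → ZMod d) (c : ZMod d) :
    ∏ i, dft d (k i) c = ZMod.stdAddChar (c * ∑ i, k i) / (√d : ℂ) ^ Fintype.card ι := by
  simp_rw [dft_apply_eq_stdAddChar, prod_div_distrib, prod_const, card_univ, mul_sum,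
    AddChar.map_sum_eq_prod, mul_comm c]

lemma sum_mul_ghzFun (d n : ℕ) [NeZero d] (f : (Fin n → ZMod d) → ℂ) :
    ∑ k, f k * ghzFun d n k = (√d : ℂ)⁻¹ * ∑ c : ZMod d, f fun _ => c := by
  simp_rw [ghzFun, mul_sum, mul_ite, mul_one, mul_zero]
  rw [sum_comm]
  simp_rw [sum_ite_eq', mem_univ, if_true, mul_comm]

lemma Real.rpow_sub_one_div_two_eq_sqrt_pow_div {x : ℝ} (hx : 0 < x) (n : ℕ) :
    x ^ (((n : ℝ) - 1) / 2) = √x ^ n / √x := by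
  rw [Real.sqrt_eq_rpow, ← Real.rpow_natCast, ← Real.rpow_mul hx.le, ← Real.rpow_sub hx]
  ring_nf

theorem dft_tensor_ghz_eq_max_general (d n : ℕ) [NeZero d] :
    (fun k : Fin n → ZMod d =>
        ∑ k' : Fin n → ZMod d, (∏ i, dft d (k i) (k' i)) * ghzFun d n k') =
      maxFun d n := by
  funext k
  have hd : (0 : ℝ) < d := Nat.cast_pos.mpr (NeZero.pos d)
  have hsqrt : (√d : ℂ) ≠ 0 := Complex.ofReal_ne_zero.mpr (Real.sqrt_pos.mpr hd).ne'
  rw [sum_mul_ghzFun]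
  simp_rw [prod_dft_apply, Fintype.card_fin, div_eq_mul_inv, ← sum_mul,
    AddChar.sum_mulShift _ (ZMod.isPrimitive_stdAddChar d), maxFun, Real.rpow_sub_one_div_two_eq_sqrt_pow_div hd]
  split_ifs
  · push_cast
    field_simp
    rw [ZMod.card, ← Complex.ofReal_natCast, ← Complex.ofReal_pow, Real.sq_sqrt hd.le]
  · simp

/-- The `n`-fold tensor power `F^{⊗n}` of the discrete Fourier transform maps
`|GHZ⟩ₙ` to `|Max⟩ₙ`. -/
theorem dft_tensor_ghz_eq_max (d n : ℕ) [NeZero d] (hn : 1 ≤ n) :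
    (fun k : Fin n → ZMod d =>
        ∑ k' : Fin n → ZMod d, (∏ i, dft d (k i) (k' i)) * ghzFun d n k') =
      maxFun d n :=
  dft_tensor_ghz_eq_max_general d n
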